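/- Let Q be a nonnegative self-adjoint trace-class operator on a real separable Hilbert space H and h : [0,∞) → ℝ a convex function with even extension, with one-dimensional Legendre transform l(r) = sup_{t≥0}(rt − h(t)). Define H₀(p) = h(‖Q^{1/2}p‖). Then the Legendre transform L₀(z) = sup_{p∈H}(⟨z,p⟩ − H₀(p)) satisfies: L₀(z) = l(‖Q^{-1/2}z‖) if z ∈ Im Q^{1/2}, and L₀(z) = +∞ if z ∉ Im Q^{1/2}. -/

import Mathlib

/-! Writing `z = S p₀` with `S` self-adjoint turns `⟪z, p⟫` into `⟪p₀, S p⟫`, so `L₀ z` is the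
supremum of `⟪p₀, v⟫ - h ‖v‖` over `v` in the range of `S`. Cauchy–Schwarz bounds it by
`l ‖p₀‖`. Conversely `p₀ ⊥ ker S` means `p₀` lies in the closure of the range, and since the
convex function `h` is continuous, `v` may run over that closure, where `v = (t / ‖p₀‖) p₀`
gives `‖p₀‖ t - h t`. If `L₀ z` is finite, then `⟪z, p⟫ ≤ C ‖S p‖` for all `p`, so
`S p ↦ ⟪z, p⟫` is a bounded functional on the range of `S`; Hahn–Banach and Riesz represent it
by some `w`, and `S w = z`. -/

open Filter Set
open scoped InnerProduct RealInnerProductSpace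

noncomputable def halfLineConjugate (h : ℝ → ℝ) (r : ℝ) : EReal :=
  ⨆ t : {t : ℝ // 0 ≤ t}, ((r * t - h t : ℝ) : EReal)

noncomputable def conjugateOfNormComp {E F : Type*} [NormedAddCommGroup E] [InnerProductSpace ℝ E]
    [NormedAddCommGroup F] [NormedSpace ℝ F] (T : E →L[ℝ] F) (h : ℝ → ℝ) (z : E) : EReal :=
  ⨆ p : E, ((⟪z, p⟫ - h ‖T p‖ : ℝ) : EReal)

theorem ConvexOn.monotoneOn_Ici_of_even {h : ℝ → ℝ} (hconv : ConvexOn ℝ univ h)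
    (heven : ∀ r, h (-r) = h r) : MonotoneOn h (Ici 0) := by
  intro s hs t _ hst
  have hseg : s ∈ segment ℝ (-t) t := by
    rw [segment_eq_Icc (by linarith [mem_Ici.1 hs])]
    exact ⟨by linarith [mem_Ici.1 hs], hst⟩
  simpa [heven] using hconv.le_on_segment (mem_univ _) (mem_univ _) hseg

section Hilbert

variable {E F : Type*} [NormedAddCommGroup E] [InnerProductSpace ℝ E]
  [NormedAddCommGroup F] [InnerProductSpace ℝ F]

theorem ContinuousLinearMap.inner_le_mul_norm_of_forall_norm_le_one (T : E →L[ℝ] F) {z : E}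
    {C : ℝ} (hC : ∀ p, ‖T p‖ ≤ 1 → ⟪z, p⟫ ≤ C) (p : E) : ⟪z, p⟫ ≤ C * ‖T p‖ := by
  rcases eq_or_ne (T p) 0 with hp | hp
  · rw [hp, norm_zero, mul_zero]
    by_contra! hpos
    obtain ⟨n, hn⟩ := exists_nat_gt (C / ⟪z, p⟫)
    have hCn := hC ((n : ℝ) • p) (by simp [hp])
    rw [inner_smul_right, ← le_div_iff₀ hpos] at hCn
    linarith
  · have hpos : 0 < ‖T p‖ := norm_pos_iff.2 hp
    have hCp := hC (‖T p‖⁻¹ • p) (by simp [norm_smul, hpos.ne'])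
    rwa [inner_smul_right, inv_mul_le_iff₀ hpos, mul_comm] at hCp

variable [CompleteSpace E] [CompleteSpace F]

theorem ContinuousLinearMap.mem_range_adjoint_of_inner_le (T : E →L[ℝ] F) {z : E} {C : ℝ}
    (hC : ∀ p, ⟪z, p⟫ ≤ C * ‖T p‖) : z ∈ range (T†) := by
  have habs : ∀ p, |⟪z, p⟫| ≤ C * ‖T p‖ := fun p => abs_le.2
    ⟨neg_le.2 (by simpa [inner_neg_right] using hC (-p)), hC p⟩
  have hker : LinearMap.ker (T : E →ₗ[ℝ] F) ≤ LinearMap.ker (innerₛₗ ℝ z) := fun p hp => by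
    simpa [show T p = 0 from hp] using habs p
  let ψ : LinearMap.range (T : E →ₗ[ℝ] F) →ₗ[ℝ] ℝ :=
    (LinearMap.ker (T : E →ₗ[ℝ] F)).liftQ (innerₛₗ ℝ z) hker ∘ₗ
      (T : E →ₗ[ℝ] F).quotKerEquivRange.symm.toLinearMap
  have hψ : ∀ p, ψ ⟨T p, LinearMap.mem_range_self _ p⟩ = ⟪z, p⟫ := fun p => by
    simp [ψ, ← ContinuousLinearMap.coe_coe]
  have hψle : ∀ v, ‖ψ v‖ ≤ C * ‖v‖ := by
    rintro ⟨_, p, rfl⟩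
    exact (hψ p).symm ▸ habs p
  obtain ⟨g, hg, -⟩ := exists_extension_norm_eq _ (ψ.mkContinuous C hψle)
  refine ⟨(InnerProductSpace.toDual ℝ F).symm g, ext_inner_right ℝ fun p => ?_⟩
  rw [ContinuousLinearMap.adjoint_inner_left, InnerProductSpace.toDual_symm_apply]
  exact (hg ⟨T p, LinearMap.mem_range_self _ p⟩).trans (hψ p)

end Hilbert

section Conjugate

variable {E F : Type*} [NormedAddCommGroup E] [InnerProductSpace ℝ E]
  [NormedAddCommGroup F] [InnerProductSpace ℝ F] (T : E →L[ℝ] F) {h : ℝ → ℝ}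

theorem le_conjugateOfNormComp (z p : E) :
    ((⟪z, p⟫ - h ‖T p‖ : ℝ) : EReal) ≤ conjugateOfNormComp T h z :=
  le_iSup (fun p => ((⟪z, p⟫ - h ‖T p‖ : ℝ) : EReal)) p

variable [CompleteSpace E] [CompleteSpace F]

theorem conjugateOfNormComp_adjoint_le (p₀ : F) :
    conjugateOfNormComp T h ((T†) p₀) ≤ halfLineConjugate h ‖p₀‖ := by
  refine iSup_le fun p => ?_
  have hinner : ⟪(T†) p₀, p⟫ ≤ ‖p₀‖ * ‖T p‖ := by
    rw [ContinuousLinearMap.adjoint_inner_left]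
    exact real_inner_le_norm _ _
  calc ((⟪(T†) p₀, p⟫ - h ‖T p‖ : ℝ) : EReal) ≤ ((‖p₀‖ * ‖T p‖ - h ‖T p‖ : ℝ) : EReal) := by
        exact_mod_cast sub_le_sub_right hinner _
    _ ≤ halfLineConjugate h ‖p₀‖ :=
        le_iSup (fun t : {t : ℝ // 0 ≤ t} => ((‖p₀‖ * t - h t : ℝ) : EReal)) ⟨_, norm_nonneg _⟩

theorem le_conjugateOfNormComp_adjoint_of_mem_closure (hh : Continuous h) (p₀ : F) {v : F}
    (hv : v ∈ closure (range T)) :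
    ((⟪p₀, v⟫ - h ‖v‖ : ℝ) : EReal) ≤ conjugateOfNormComp T h ((T†) p₀) := by
  refine closure_minimal ?_ (isClosed_le (f := fun v => ((⟪p₀, v⟫ - h ‖v‖ : ℝ) : EReal))
    (continuous_coe_real_ereal.comp (by fun_prop)) continuous_const) hv
  rintro _ ⟨p, rfl⟩
  rw [mem_ofPred_eq, ← ContinuousLinearMap.adjoint_inner_left]
  exact le_conjugateOfNormComp T _ p

theorem halfLineConjugate_le_conjugateOfNormComp_adjoint (hconv : ConvexOn ℝ univ h)
    (heven : ∀ r, h (-r) = h r) {p₀ : F} (hp₀ : p₀ ∈ closure (range T)) :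
    halfLineConjugate h ‖p₀‖ ≤ conjugateOfNormComp T h ((T†) p₀) := by
  refine iSup_le fun ⟨t, ht⟩ => ?_
  rcases eq_or_ne p₀ 0 with rfl | hp₀0
  · have hh0 : h 0 ≤ h t := hconv.monotoneOn_Ici_of_even heven (mem_Ici.2 le_rfl) ht ht
    calc ((‖(0 : F)‖ * t - h t : ℝ) : EReal) ≤ ((⟪(T†) 0, 0⟫ - h ‖T 0‖ : ℝ) : EReal) := by
          simpa using hh0
      _ ≤ _ := le_conjugateOfNormComp T _ 0
  · have hnorm : 0 < ‖p₀‖ := norm_pos_iff.2 hp₀0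
    have hv : (t / ‖p₀‖) • p₀ ∈ closure (range T) :=
      (LinearMap.range (T : E →ₗ[ℝ] F)).topologicalClosure.smul_mem _ hp₀
    have hval : ⟪p₀, (t / ‖p₀‖) • p₀⟫ - h ‖(t / ‖p₀‖) • p₀‖ = ‖p₀‖ * t - h t := by
      rw [inner_smul_right, real_inner_self_eq_norm_mul_norm, norm_smul,
        Real.norm_of_nonneg (by positivity), div_mul_cancel₀ _ hnorm.ne']
      field_simp
    simpa only [hval] using le_conjugateOfNormComp_adjoint_of_mem_closure T
      (continuousOn_univ.1 (hconv.continuousOn isOpen_univ)) p₀ hv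

theorem conjugateOfNormComp_eq_top (hmono : MonotoneOn h (Ici 0)) {z : E}
    (hz : z ∉ range (T†)) : conjugateOfNormComp T h z = ⊤ := by
  refine (EReal.eq_top_iff_forall_lt _).2 fun M => ?_
  by_contra! hM
  have hbound : ∀ p, ‖T p‖ ≤ 1 → ⟪z, p⟫ ≤ M + h 1 := fun p hp => by
    have h1 : ((⟪z, p⟫ - h ‖T p‖ : ℝ) : EReal) ≤ M := (le_conjugateOfNormComp T z p).trans hM
    have h2 : h ‖T p‖ ≤ h 1 := hmono (norm_nonneg _) (mem_Ici.2 zero_le_one) hp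
    linarith [EReal.coe_le_coe_iff.1 h1]
  exact hz (T.mem_range_adjoint_of_inner_le (T.inner_le_mul_norm_of_forall_norm_le_one hbound))

end Conjugate

theorem legendre_transform_of_radial_hamiltonian_general
    {H : Type*} [NormedAddCommGroup H] [InnerProductSpace ℝ H] [CompleteSpace H]
    (S : H →L[ℝ] H)
    (hSsa : ∀ x y : H, (inner ℝ (S x) y : ℝ) = inner ℝ x (S y))
    (h : ℝ → ℝ) (hconv : ConvexOn ℝ Set.univ h) (heven : ∀ r : ℝ, h (-r) = h r)
    (l : ℝ → EReal)
    (hl : ∀ r : ℝ, l r = ⨆ t : {t : ℝ // 0 ≤ t}, ((r * (t : ℝ) - h t : ℝ) : EReal))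
    (H₀ : H → ℝ) (hH₀ : ∀ p : H, H₀ p = h ‖S p‖)
    (L₀ : H → EReal)
    (hL₀ : ∀ z : H, L₀ z = ⨆ p : H, (((inner ℝ z p : ℝ) - H₀ p : ℝ) : EReal)) :
    (∀ z p₀ : H, S p₀ = z → (∀ q : H, S q = 0 → (inner ℝ p₀ q : ℝ) = 0) →
        L₀ z = l ‖p₀‖) ∧
    (∀ z : H, z ∉ Set.range S → L₀ z = ⊤) := by
  have hS : S† = S := LinearMap.IsSymmetric.clm_adjoint_eq hSsa
  obtain rfl : l = halfLineConjugate h := funext hl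
  obtain rfl : L₀ = conjugateOfNormComp S h := funext fun z => by simp only [hL₀, hH₀]; rfl
  refine ⟨fun z p₀ hz hp₀ => ?_, fun z hz => ?_⟩
  · have hcl : p₀ ∈ closure (range S) := by
      have : p₀ ∈ S.kerᗮ := (Submodule.mem_orthogonal' _ _).2 hp₀
      rwa [S.orthogonal_ker, hS] at this
    rw [show z = (S†) p₀ by rw [hS, hz]]
    exact le_antisymm (conjugateOfNormComp_adjoint_le S p₀)
      (halfLineConjugate_le_conjugateOfNormComp_adjoint S hconv heven hcl)
  · exact conjugateOfNormComp_eq_top S (hconv.monotoneOn_Ici_of_even heven) (by rwa [hS])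

/-- Legendre transform of `H₀(p) = h(‖Q^{1/2}p‖)` for a nonnegative self-adjoint trace-class
operator `Q` with square root `S = Q^{1/2}`: it equals `l(‖Q^{-1/2}z‖)` on the range of `S`
(where `Q^{-1/2}z` is the unique preimage orthogonal to `ker S`) and `+∞` off the range. -/
theorem legendre_transform_of_radial_hamiltonian
    {H : Type*} [NormedAddCommGroup H] [InnerProductSpace ℝ H] [CompleteSpace H]
    (Q S : H →L[ℝ] H)
    (hQsa : ∀ x y : H, (inner ℝ (Q x) y : ℝ) = inner ℝ x (Q y))
    (hQpos : ∀ x : H, 0 ≤ (inner ℝ (Q x) x : ℝ))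
    (hQtrace : ∀ e : ℕ → H, Orthonormal ℝ e → Summable (fun n => (inner ℝ (Q (e n)) (e n) : ℝ)))
    (hSsa : ∀ x y : H, (inner ℝ (S x) y : ℝ) = inner ℝ x (S y))
    (hSpos : ∀ x : H, 0 ≤ (inner ℝ (S x) x : ℝ))
    (hSsq : ∀ x : H, S (S x) = Q x)
    (h : ℝ → ℝ) (hconv : ConvexOn ℝ Set.univ h) (heven : ∀ r : ℝ, h (-r) = h r)
    (l : ℝ → EReal)
    (hl : ∀ r : ℝ, l r = ⨆ t : {t : ℝ // 0 ≤ t}, ((r * (t : ℝ) - h t : ℝ) : EReal))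
    (hlmono : Monotone l) (hltop : Tendsto l atTop (nhds ⊤))
    (H₀ : H → ℝ) (hH₀ : ∀ p : H, H₀ p = h ‖S p‖)
    (L₀ : H → EReal)
    (hL₀ : ∀ z : H, L₀ z = ⨆ p : H, (((inner ℝ z p : ℝ) - H₀ p : ℝ) : EReal)) :
    (∀ z p₀ : H, S p₀ = z → (∀ q : H, S q = 0 → (inner ℝ p₀ q : ℝ) = 0) →
        L₀ z = l ‖p₀‖) ∧
    (∀ z : H, z ∉ Set.range S → L₀ z = ⊤) :=
  legendre_transform_of_radial_hamiltonian_general S hSsa h hconv heven l hl H₀ hH₀ L₀ hL₀
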